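/- Product update with the action model E1 computes the inflating update rule: for any threshold model M = (A, N, B, θ), the product model M ⊗ E1 is isomorphic (as a threshold model, i.e., preserving network and behavior set) to (A, N, B⁺, θ) where B⁺ = B ∪ {a : |N(a) ∩ B|/|N(a)| ≥ θ}. -/

import Mathlib

open Finset
open scoped Classical

variable {α : Type*}

noncomputable def nbhd [Fintype α] (N : α → α → Prop) (a : α) : Finset α :=
  Finset.univ.filter (fun b => N a b)

noncomputable def frac [Fintype α] (N : α → α → Prop) (B : Finset α) (a : α) : ℝ :=
  ((nbhd N a ∩ B).card : ℝ) / ((nbhd N a).card : ℝ)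

/-- Postconditions of action-model states: `B`, `¬B`, or `⊤` (no change). -/
inductive Post where
  | B : Post
  | notB : Post
  | top : Post
deriving DecidableEq

/-- An action model over agents `α` with states `S`: a relation, and for each
state a precondition (given by its extension, a set of agents) and a
postcondition. -/
structure ActionModel (α : Type*) (S : Type*) where
  R : S → S → Prop
  pre : S → Finset α
  post : S → Post

/-- Membership of a product-update pair `(a,σ)` in the updated behavior set
`B↑`. -/
def BUp (E : ActionModel α S) (B : Finset α) (a : α) (σ : S) : Prop :=
  (a ∈ B ∧ E.post σ ≠ Post.notB) ∨ E.post σ = Post.B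

noncomputable def infl [Fintype α] (N : α → α → Prop) (θ : ℝ) (B : Finset α) : Finset α :=
  B ∪ Finset.univ.filter (fun a => θ ≤ frac N B a)

/-- The action model `E1`: state `0` has precondition `⟨≤⟩B` and postcondition
`B`; state `1` has precondition `¬⟨≤⟩B` and postcondition `⊤`; full relation. -/
noncomputable def E1 [Fintype α] (N : α → α → Prop) (θ : ℝ) (B : Finset α) :
    ActionModel α (Fin 2) where
  R := fun _ _ => True
  pre := fun σ =>
    if σ = 0 then Finset.univ.filter (fun a => θ ≤ frac N B a)
    else Finset.univ.filter (fun a => ¬ θ ≤ frac N B a)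
  post := fun σ => if σ = 0 then Post.B else Post.top

/-! The preconditions `⟨≤⟩B` and `¬⟨≤⟩B` of `E1` partition the agents, so every agent survives
the product update in exactly one copy, and since `E1`'s relation is full the copies carry the
network `N` unchanged. The copy in `σ₁` is made to behave `B`, the copy in `σ₂` keeps its
behavior, which is exactly the inflating rule. -/

namespace ActionModel

variable {S : Type*}

def productSection (E : ActionModel α S) (s : α → S) (hs : ∀ a σ, a ∈ E.pre σ ↔ σ = s a) :
    α → {p : α × S // p.1 ∈ E.pre p.2} :=
  fun a => ⟨(a, s a), (hs a (s a)).2 rfl⟩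

theorem productSection_bijective (E : ActionModel α S) (s : α → S)
    (hs : ∀ a σ, a ∈ E.pre σ ↔ σ = s a) : Function.Bijective (E.productSection s hs) := by
  refine ⟨fun a b hab => congrArg (fun p => p.1.1) hab, ?_⟩
  rintro ⟨⟨a, σ⟩, hpre⟩
  obtain rfl : σ = s a := (hs a σ).1 hpre
  exact ⟨a, rfl⟩

end ActionModel

section E1

variable [Fintype α] (N : α → α → Prop) (θ : ℝ) (B : Finset α)

noncomputable def E1State (a : α) : Fin 2 :=
  if θ ≤ frac N B a then 0 else 1

theorem mem_E1_pre_iff (a : α) (σ : Fin 2) : a ∈ (E1 N θ B).pre σ ↔ σ = E1State N θ B a := by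
  by_cases h : θ ≤ frac N B a
  · fin_cases σ <;> simp [E1, E1State, h]
  · fin_cases σ <;> simp [E1, E1State, h, not_le.1 h]

theorem BUp_E1State_iff (a : α) : BUp (E1 N θ B) B a (E1State N θ B a) ↔ a ∈ infl N θ B := by
  by_cases h : θ ≤ frac N B a <;> simp [BUp, E1, E1State, infl, h]

end E1

theorem E1_computes_inflating_general [Fintype α] (N : α → α → Prop)
    (θ : ℝ) (B : Finset α) :
    ∃ f : α → {p : α × Fin 2 // p.1 ∈ (E1 N θ B).pre p.2},
      Function.Bijective f ∧ (∀ a, (f a).1.1 = a) ∧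
      (∀ a b, N a b ↔
        (N (f a).1.1 (f b).1.1 ∧ (E1 N θ B).R (f a).1.2 (f b).1.2)) ∧
      (∀ a, a ∈ infl N θ B ↔ BUp (E1 N θ B) B (f a).1.1 (f a).1.2) := by
  let f := (E1 N θ B).productSection (E1State N θ B) (mem_E1_pre_iff N θ B)
  refine ⟨f, (E1 N θ B).productSection_bijective _ _, fun _ => rfl, ?_, ?_⟩
  · intro a b
    simp [f, ActionModel.productSection, E1]
  · intro a
    exact (BUp_E1State_iff N θ B a).symm

/-- product update with `E1` computes the inflating update rule:
`M ⊗ E1` is isomorphic to `(A, N, B⁺, θ)` with `B⁺ = infl N θ B`. -/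
theorem E1_computes_inflating [Fintype α] (N : α → α → Prop)
    (hirr : ∀ a, ¬ N a a) (hsym : ∀ a b, N a b → N b a)
    (θ : ℝ) (hθ0 : 0 ≤ θ) (hθ1 : θ ≤ 1) (B : Finset α)
    (hnb : ∀ a, (nbhd N a).Nonempty) :
    ∃ f : α → {p : α × Fin 2 // p.1 ∈ (E1 N θ B).pre p.2},
      Function.Bijective f ∧ (∀ a, (f a).1.1 = a) ∧
      (∀ a b, N a b ↔
        (N (f a).1.1 (f b).1.1 ∧ (E1 N θ B).R (f a).1.2 (f b).1.2)) ∧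
      (∀ a, a ∈ infl N θ B ↔ BUp (E1 N θ B) B (f a).1.1 (f a).1.2) :=
  E1_computes_inflating_general N θ B
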